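/- arXiv:2011.11464 — 2 statements merged into one kernel-verified Lean document; each statement's English description precedes it below -/
import Mathlib

section
/- Let P, Q be symmetric positive definite n×n matrices and M an n×n matrix with PM + MᵀP = -Q. Then along any solution ξ of ξ' = M(ξ - c), the function t ↦ (ξ(t) - c)ᵀP(ξ(t) - c) is strictly decreasing whenever ξ(t) ≠ c, and moreover for any r > 0 there exists ε > 0 such that the derivative is less than -ε whenever |ξ(t) - c| ≥ r. -/
open Matrix

/-!
Differentiating `V(ξ) = (ξ - c)ᵀ P (ξ - c)` along `ξ' = M (ξ - c)` and using the Lyapunov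
equation gives `V' = -(ξ - c)ᵀ Q (ξ - c)`. A positive definite quadratic form is bounded below
by `m ‖x‖²` for some `m > 0` (its minimum on the unit sphere, by compactness and homogeneity),
so `V' ≤ -m ‖ξ - c‖²`, and `ε = m r² / 2` works outside the ball of radius `r`.
-/

open scoped RealInnerProductSpace in
theorem Matrix.hasDerivAt_dotProduct_mulVec {ι : Type*} [Fintype ι]
    (A : Matrix ι ι ℝ) {x : ℝ → EuclideanSpace ℝ ι} {x' : EuclideanSpace ℝ ι} {t : ℝ}
    (hx : HasDerivAt x x' t) :
    HasDerivAt (fun τ => (x τ : ι → ℝ) ⬝ᵥ A *ᵥ x τ) (x' ⬝ᵥ A *ᵥ x t + x t ⬝ᵥ A *ᵥ x') t := by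
  classical
  simp_rw [← inner_toEuclideanCLM]
  rw [add_comm]
  exact hx.inner ℝ ((toEuclideanCLM (𝕜 := ℝ) A).hasFDerivAt.comp_hasDerivAt t hx)

theorem Matrix.dotProduct_mul_add_transpose_mul_mulVec {ι R : Type*} [Fintype ι] [CommSemiring R]
    (P M : Matrix ι ι R) (x : ι → R) :
    x ⬝ᵥ (P * M + Mᵀ * P) *ᵥ x = (M *ᵥ x) ⬝ᵥ P *ᵥ x + x ⬝ᵥ P *ᵥ (M *ᵥ x) := by
  rw [add_mulVec, dotProduct_add, add_comm, ← mulVec_mulVec, ← mulVec_mulVec,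
    dotProduct_mulVec x Mᵀ, vecMul_transpose]

theorem exists_pos_mul_norm_sq_le {E : Type*} [NormedAddCommGroup E] [NormedSpace ℝ E]
    [FiniteDimensional ℝ E] {f : E → ℝ} (hf : Continuous f)
    (hsmul : ∀ (a : ℝ) (x : E), f (a • x) = a ^ 2 * f x) (hpos : ∀ x ≠ 0, 0 < f x) :
    ∃ m > 0, ∀ x, m * ‖x‖ ^ 2 ≤ f x := by
  have hf0 : f 0 = 0 := by simpa using hsmul 0 0
  cases subsingleton_or_nontrivial E with
  | inl _ => exact ⟨1, one_pos, fun x => by simp [Subsingleton.elim x 0, hf0]⟩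
  | inr _ =>
    obtain ⟨u, hu, hmin⟩ := (isCompact_sphere (0 : E) 1).exists_isMinOn
      (NormedSpace.sphere_nonempty.2 zero_le_one) hf.continuousOn
    refine ⟨f u, hpos u (ne_zero_of_mem_unit_sphere ⟨u, hu⟩), fun x => ?_⟩
    rcases eq_or_ne x 0 with rfl | hx
    · simp [hf0]
    have hx' : ‖x‖ ≠ 0 := norm_ne_zero_iff.2 hx
    have hunit : ‖x‖⁻¹ • x ∈ Metric.sphere (0 : E) 1 := by
      simp [norm_smul, hx']
    calc f u * ‖x‖ ^ 2 ≤ f (‖x‖⁻¹ • x) * ‖x‖ ^ 2 := by gcongr; exact hmin hunit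
      _ = f x := by rw [hsmul]; field_simp

theorem Matrix.PosDef.exists_pos_mul_norm_sq_le_dotProduct_mulVec {ι : Type*} [Fintype ι]
    {Q : Matrix ι ι ℝ} (hQ : Q.PosDef) :
    ∃ m > 0, ∀ x : EuclideanSpace ℝ ι, m * ‖x‖ ^ 2 ≤ (x : ι → ℝ) ⬝ᵥ Q *ᵥ x := by
  classical
  refine exists_pos_mul_norm_sq_le ?_ (fun a x => ?_) (fun x hx => ?_)
  · simp_rw [← inner_toEuclideanCLM]
    fun_prop
  · simp only [WithLp.ofLp_smul, mulVec_smul, dotProduct_smul, smul_dotProduct, smul_eq_mul]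
    ring
  · exact hQ.dotProduct_mulVec_pos (by simpa using hx)

theorem hasDerivAt_dotProduct_mulVec_sub_of_lyapunov {ι : Type*} [Fintype ι]
    {P Q M : Matrix ι ι ℝ} (hLyap : P * M + Mᵀ * P = -Q) {c : EuclideanSpace ℝ ι}
    {ξ : ℝ → EuclideanSpace ℝ ι} {t : ℝ}
    (hξ : HasDerivAt ξ (WithLp.toLp 2 (M *ᵥ (ξ t - c))) t) :
    HasDerivAt (fun τ => (ξ τ - c : ι → ℝ) ⬝ᵥ P *ᵥ (ξ τ - c))
      (-((ξ t - c : ι → ℝ) ⬝ᵥ Q *ᵥ (ξ t - c))) t := by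
  have h := P.hasDerivAt_dotProduct_mulVec (hξ.sub_const c)
  simp only [WithLp.ofLp_sub] at h
  rwa [← dotProduct_neg, ← neg_mulVec, ← hLyap, dotProduct_mul_add_transpose_mul_mulVec]

theorem stmt_7_general {n : ℕ} (P Q M : Matrix (Fin n) (Fin n) ℝ)
    (hQ : Q.PosDef)
    (hLyap : P * M + Mᵀ * P = -Q)
    (c : EuclideanSpace ℝ (Fin n)) (ξ : ℝ → EuclideanSpace ℝ (Fin n))
    (hξ : ∀ t : ℝ, HasDerivAt ξ (WithLp.toLp 2 (M.mulVec (ξ t - c) : Fin n → ℝ) : EuclideanSpace ℝ (Fin n)) t) :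
    (∀ t : ℝ, ξ t ≠ c →
        deriv (fun τ => ((ξ τ - c : Fin n → ℝ) ⬝ᵥ P.mulVec (ξ τ - c))) t < 0) ∧
      ∀ r > (0 : ℝ), ∃ ε > (0 : ℝ), ∀ t : ℝ, r ≤ ‖ξ t - c‖ →
        deriv (fun τ => ((ξ τ - c : Fin n → ℝ) ⬝ᵥ P.mulVec (ξ τ - c))) t < -ε := by
  obtain ⟨m, hm, hQ_ge⟩ := hQ.exists_pos_mul_norm_sq_le_dotProduct_mulVec
  have hderiv_le (t : ℝ) :
      deriv (fun τ => ((ξ τ - c : Fin n → ℝ) ⬝ᵥ P.mulVec (ξ τ - c))) t ≤ -(m * ‖ξ t - c‖ ^ 2) := by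
    rw [(hasDerivAt_dotProduct_mulVec_sub_of_lyapunov hLyap (hξ t)).deriv]
    exact neg_le_neg (hQ_ge _)
  refine ⟨fun t ht => ?_, fun r hr => ⟨m * r ^ 2 / 2, by positivity, fun t hrt => ?_⟩⟩
  · have : 0 < ‖ξ t - c‖ := norm_pos_iff.2 (sub_ne_zero.2 ht)
    linarith [hderiv_le t, mul_pos hm (pow_pos this 2)]
  · have : m * r ^ 2 ≤ m * ‖ξ t - c‖ ^ 2 := by gcongr
    linarith [hderiv_le t, mul_pos hm (pow_pos hr 2)]

theorem stmt_7 {n : ℕ} (P Q M : Matrix (Fin n) (Fin n) ℝ)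
    (hP : P.PosDef) (hPsym : P.IsHermitian) (hQ : Q.PosDef) (hQsym : Q.IsHermitian)
    (hLyap : P * M + Mᵀ * P = -Q)
    (c : EuclideanSpace ℝ (Fin n)) (ξ : ℝ → EuclideanSpace ℝ (Fin n))
    (hξ : ∀ t : ℝ, HasDerivAt ξ (WithLp.toLp 2 (M.mulVec (ξ t - c) : Fin n → ℝ) : EuclideanSpace ℝ (Fin n)) t) :
    (∀ t : ℝ, ξ t ≠ c →
        deriv (fun τ => ((ξ τ - c : Fin n → ℝ) ⬝ᵥ P.mulVec (ξ τ - c))) t < 0) ∧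
      ∀ r > (0 : ℝ), ∃ ε > (0 : ℝ), ∀ t : ℝ, r ≤ ‖ξ t - c‖ →
        deriv (fun τ => ((ξ τ - c : Fin n → ℝ) ⬝ᵥ P.mulVec (ξ τ - c))) t < -ε :=
  stmt_7_general P Q M hQ hLyap c ξ hξ
end

section
/- Let P, Q be symmetric positive definite n×n matrices with PM + MᵀP = -Q, and ξ a solution of ξ' = M(ξ - c) with initial condition ξ(0) = ξ₀. Then for every r > 0 there exists a finite time T ≥ 0 such that |ξ(T) - c| ≤ r. -/
/-!
The Lyapunov function `V = (ξ - c)ᵀ P (ξ - c)` is nonnegative, and along solutions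
`V' = -(ξ - c)ᵀ Q (ξ - c) ≤ -β ‖ξ - c‖²`, where `β > 0` bounds the quadratic form of `Q` on the
unit sphere. A nonnegative function cannot decrease at rate `β r²` for all time: by the mean value
theorem there is a time where `V' > -β r²`, and there `‖ξ - c‖ < r`.
-/

open Matrix

open scoped RealInnerProductSpace

theorem exists_pos_mul_sq_norm_le_inner_self {E : Type*} [NormedAddCommGroup E]
    [InnerProductSpace ℝ E] [FiniteDimensional ℝ E] (T : E →L[ℝ] E)
    (hT : ∀ x ≠ 0, 0 < ⟪x, T x⟫) : ∃ m > 0, ∀ x, m * ‖x‖ ^ 2 ≤ ⟪x, T x⟫ := by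
  rcases subsingleton_or_nontrivial E with hE | hE
  · exact ⟨1, one_pos, fun x => by simp [Subsingleton.elim x 0]⟩
  obtain ⟨z, hz, hmin⟩ := (isCompact_sphere (0 : E) 1).exists_isMinOn
    (NormedSpace.sphere_nonempty.mpr zero_le_one)
    (continuous_id.inner (𝕜 := ℝ) T.continuous).continuousOn
  have hz1 : ‖z‖ = 1 := by simpa using hz
  refine ⟨⟪z, T z⟫, hT z (norm_ne_zero_iff.mp (by simp [hz1])), fun x => ?_⟩
  rcases eq_or_ne x 0 with rfl | hx
  · simp
  have hx' : ‖x‖ ≠ 0 := norm_ne_zero_iff.mpr hx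
  have hmin_x : ⟪z, T z⟫ ≤ ⟪‖x‖⁻¹ • x, T (‖x‖⁻¹ • x)⟫ :=
    hmin (by simp [norm_smul, hx'])
  rw [map_smul, real_inner_smul_left, real_inner_smul_right, ← mul_assoc] at hmin_x
  calc ⟪z, T z⟫ * ‖x‖ ^ 2 ≤ ‖x‖⁻¹ * ‖x‖⁻¹ * ⟪x, T x⟫ * ‖x‖ ^ 2 := by gcongr
    _ = ⟪x, T x⟫ := by field_simp

theorem Matrix.PosDef.exists_pos_mul_sq_norm_le {ι : Type*} [Fintype ι] [DecidableEq ι]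
    {A : Matrix ι ι ℝ} (hA : A.PosDef) :
    ∃ m > 0, ∀ x : EuclideanSpace ℝ ι, m * ‖x‖ ^ 2 ≤ x.ofLp ⬝ᵥ A *ᵥ x.ofLp := by
  simp_rw [← inner_toEuclideanCLM]
  refine exists_pos_mul_sq_norm_le_inner_self _ fun x hx => ?_
  simpa [inner_toEuclideanCLM] using hA.dotProduct_mulVec_pos (x := x.ofLp) (by simpa using hx)

theorem hasDerivAt_dotProduct_mulVec_of_linear_ode {ι : Type*} [Fintype ι] [DecidableEq ι]
    (P M : Matrix ι ι ℝ) {y : ℝ → EuclideanSpace ℝ ι} {t : ℝ}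
    (hy : HasDerivAt y (WithLp.toLp 2 (M *ᵥ (y t).ofLp)) t) :
    HasDerivAt (fun s => (y s).ofLp ⬝ᵥ P *ᵥ (y s).ofLp)
      ((y t).ofLp ⬝ᵥ (P * M + Mᵀ * P) *ᵥ (y t).ofLp) t := by
  let TP := toEuclideanCLM (𝕜 := ℝ) P
  simp_rw [← inner_toEuclideanCLM]
  refine (hy.inner ℝ (TP.hasFDerivAt.comp_hasDerivAt t hy)).congr_deriv ?_
  simp only [Function.comp_apply, EuclideanSpace.inner_eq_star_dotProduct, star_trivial, TP,
    ofLp_toEuclideanCLM]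
  rw [add_mulVec, add_dotProduct, ← mulVec_mulVec, ← mulVec_mulVec, mulVec_transpose,
    ← dotProduct_mulVec]

theorem exists_neg_lt_deriv_of_nonneg {V V' : ℝ → ℝ} (hV : ∀ t, HasDerivAt V (V' t) t)
    (hV_nonneg : ∀ t, 0 ≤ V t) {ε : ℝ} (hε : 0 < ε) : ∃ t > 0, -ε < V' t := by
  set T := V 0 / ε + 1
  have hT : 0 < T := by have := hV_nonneg 0; positivity
  obtain ⟨t, ⟨ht, -⟩, hslope⟩ := exists_hasDerivAt_eq_slope V V' hT
    (fun s _ => (hV s).continuousAt.continuousWithinAt) (fun s _ => hV s)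
  refine ⟨t, ht, ?_⟩
  have hV0 : V 0 < ε * T := by
    simp only [T, mul_add, mul_div_cancel₀ _ hε.ne']
    linarith
  rw [hslope, sub_zero, lt_div_iff₀ hT]
  linarith [hV_nonneg T]

theorem stmt_8_general {n : ℕ} (P Q M : Matrix (Fin n) (Fin n) ℝ)
    (hP : P.PosDef) (hQ : Q.PosDef)
    (hLyap : P * M + Mᵀ * P = -Q)
    (c : EuclideanSpace ℝ (Fin n)) (ξ : ℝ → EuclideanSpace ℝ (Fin n))
    (hξ : ∀ t : ℝ, HasDerivAt ξ (WithLp.toLp 2 (M.mulVec (ξ t - c) : Fin n → ℝ) : EuclideanSpace ℝ (Fin n)) t) :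
    ∀ r > (0 : ℝ), ∃ T : ℝ, 0 ≤ T ∧ ‖ξ T - c‖ ≤ r := by
  intro r hr
  obtain ⟨β, hβ, hQβ⟩ := hQ.exists_pos_mul_sq_norm_le
  have hV : ∀ t, HasDerivAt (fun s => (ξ s - c).ofLp ⬝ᵥ P *ᵥ (ξ s - c).ofLp)
      (-((ξ t - c).ofLp ⬝ᵥ Q *ᵥ (ξ t - c).ofLp)) t := fun t => by
    simpa only [hLyap, neg_mulVec, dotProduct_neg] using
      hasDerivAt_dotProduct_mulVec_of_linear_ode P M ((hξ t).sub_const c)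
  obtain ⟨T, hT, hVT⟩ := exists_neg_lt_deriv_of_nonneg hV
    (fun t => by simpa only [star_trivial] using
      hP.posSemidef.dotProduct_mulVec_nonneg (ξ t - c).ofLp)
    (by positivity : 0 < β * r ^ 2)
  refine ⟨T, hT.le, le_of_lt ?_⟩
  have hβnorm : β * ‖ξ T - c‖ ^ 2 < β * r ^ 2 := by linarith [hQβ (ξ T - c)]
  exact (pow_lt_pow_iff_left₀ (norm_nonneg _) hr.le two_ne_zero).mp
    (lt_of_mul_lt_mul_left hβnorm hβ.le)

theorem stmt_8 {n : ℕ} (P Q M : Matrix (Fin n) (Fin n) ℝ)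
    (hP : P.PosDef) (hPsym : P.IsHermitian) (hQ : Q.PosDef) (hQsym : Q.IsHermitian)
    (hLyap : P * M + Mᵀ * P = -Q)
    (c ξ₀ : EuclideanSpace ℝ (Fin n)) (ξ : ℝ → EuclideanSpace ℝ (Fin n))
    (hξ0 : ξ 0 = ξ₀)
    (hξ : ∀ t : ℝ, HasDerivAt ξ (WithLp.toLp 2 (M.mulVec (ξ t - c) : Fin n → ℝ) : EuclideanSpace ℝ (Fin n)) t) :
    ∀ r > (0 : ℝ), ∃ T : ℝ, 0 ≤ T ∧ ‖ξ T - c‖ ≤ r :=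
  stmt_8_general P Q M hP hQ hLyap c ξ hξ
end
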